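/- arXiv:1012.3919 — 4 statements merged into one kernel-verified Lean document; each statement's English description precedes it below -/
import Mathlib

section
/- Let p > 5 be a prime. If p ≢ 1 and p ≢ 19 (mod 30), then λ(3, 5; p) = 0. If p ≡ 1 or 19 (mod 30), then there exist integers x, y with p = x² + 15y², and for any such x, y one has λ(3, 5; p) = 4x² − 2p. -/
/-!
A solution of `3x² + 5y² = 8p` gives `p ≡ y² (mod 3)` and `p ≡ x² (mod 5)`, so `λ(3, 5; p)` is an
empty sum unless `p ≡ 1, 19 (mod 30)`. In that case `-15` is a square mod `p` (a Jacobi symbol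
computation), and Thue's lemma gives `x² + 15y² = kp` with `1 ≤ k ≤ 15`; congruences mod 3 and 5
leave `k ∈ {1, 4, 6, 9, 10, 15}`, and each of these descends to `k = 1`.

Given `p = a² + 15b²`, the composition identity
`(3x² + 5y²)(a² + 15b²) = 3(xa + 5yb)² + 5(ya - 3xb)²` shows that the solutions of
`3x² + 5y² = 8p` are `(±(a + 5b), ±(a - 3b))` and `(±(a - 5b), ±(a + 3b))`. Exactly one sign
choice in each family satisfies `x ≡ y ≡ 1 (mod 4)`, and the two products sum to
`(a + 5b)(a - 3b) + (a - 5b)(a + 3b) = 2a² - 30b² = 4a² - 2p`.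
-/

/-- `lam a b N` is λ(a, b; N+1): the finite sum of x·y over all integer pairs (x, y)
with x ≡ y ≡ 1 (mod 4) and a·x² + b·y² = 8N + a + b. -/
noncomputable def lam (a b N : ℤ) : ℤ :=
  ∑ᶠ xy ∈ {xy : ℤ × ℤ | xy.1 % 4 = 1 ∧ xy.2 % 4 = 1 ∧
      a * xy.1 ^ 2 + b * xy.2 ^ 2 = 8 * N + a + b}, xy.1 * xy.2

namespace Int

lemma sq_emod_two (x : ℤ) : x ^ 2 % 2 = x % 2 := by
  rcases emod_two_eq x with h | h <;> simp [pow_two, mul_emod, h]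

lemma sq_emod_three (x : ℤ) : x % 3 = 0 ∧ x ^ 2 % 3 = 0 ∨ x ^ 2 % 3 = 1 := by
  rcases (by omega : x % 3 = 0 ∨ x % 3 = 1 ∨ x % 3 = 2) with h | h | h <;>
    simp [pow_two, mul_emod, h]

lemma sq_emod_five (x : ℤ) : x % 5 = 0 ∧ x ^ 2 % 5 = 0 ∨ x ^ 2 % 5 = 1 ∨ x ^ 2 % 5 = 4 := by
  rcases (by omega : x % 5 = 0 ∨ x % 5 = 1 ∨ x % 5 = 2 ∨ x % 5 = 3 ∨ x % 5 = 4) with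
    h | h | h | h | h <;> simp [pow_two, mul_emod, h]

lemma sq_emod_eight_of_odd {x : ℤ} (hx : Odd x) : x ^ 2 % 8 = 1 := by
  obtain ⟨k, rfl⟩ := hx
  obtain ⟨m, hm⟩ := even_mul_succ_self k
  rw [show (2 * k + 1) ^ 2 = 4 * (k * (k + 1)) + 1 by ring, hm]
  omega

/-- Thue's lemma. -/
theorem exists_dvd_sub_mul_of_not_isSquare {n : ℕ} (hn : ¬ IsSquare n) (c : ℤ) :
    ∃ a b : ℤ, (a ≠ 0 ∨ b ≠ 0) ∧ (n : ℤ) ∣ a - c * b ∧ a ^ 2 < n ∧ b ^ 2 < n := by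
  have : NeZero n := ⟨by rintro rfl; exact hn ⟨0, rfl⟩⟩
  set r := n.sqrt
  have hr : r ^ 2 < n := (Nat.sqrt_le' n).lt_of_ne fun h => hn ⟨r, by rw [← h, sq]⟩
  have hcard : (Finset.univ : Finset (ZMod n)).card <
      (Finset.Icc (0 : ℤ) r ×ˢ Finset.Icc (0 : ℤ) r).card := by
    simpa [ZMod.card, Int.card_Icc, ← sq] using Nat.lt_succ_sqrt' n
  obtain ⟨⟨a₁, b₁⟩, h₁, ⟨a₂, b₂⟩, h₂, hne, heq⟩ := Finset.exists_ne_map_eq_of_card_lt_of_maps_to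
    hcard (f := fun ab : ℤ × ℤ => ((ab.1 - c * ab.2 : ℤ) : ZMod n)) fun _ _ => by simp
  simp only [Finset.mem_product, Finset.mem_Icc] at h₁ h₂
  have hsq : ∀ u v : ℤ, 0 ≤ u → u ≤ r → 0 ≤ v → v ≤ r → (u - v) ^ 2 < n := by
    intro u v hu hu' hv hv'
    have : (u - v) ^ 2 ≤ (r : ℤ) ^ 2 := sq_le_sq' (by omega) (by omega)
    exact this.trans_lt (by exact_mod_cast hr)
  refine ⟨a₁ - a₂, b₁ - b₂, ?_, ?_, hsq _ _ h₁.1.1 h₁.1.2 h₂.1.1 h₂.1.2,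
    hsq _ _ h₁.2.1 h₁.2.2 h₂.2.1 h₂.2.2⟩
  · by_contra! h
    exact hne (Prod.ext (by omega) (by omega))
  · rw [← ZMod.intCast_zmod_eq_zero_iff_dvd]
    simp only at heq
    push_cast at heq ⊢
    linear_combination heq

end Int

theorem exists_sq_add_mul_sq_eq_mul {p : ℕ} (hp : p.Prime) {c d : ℤ} (hd : 0 < d)
    (hc : (p : ℤ) ∣ c ^ 2 + d) : ∃ x y k : ℤ, 0 < k ∧ k ≤ d ∧ x ^ 2 + d * y ^ 2 = k * p := by
  obtain ⟨a, b, hab, hdvd, ha, hb⟩ := Int.exists_dvd_sub_mul_of_not_isSquare hp.not_isSquare c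
  obtain ⟨k, hk⟩ : (p : ℤ) ∣ a ^ 2 + d * b ^ 2 := by
    rw [show a ^ 2 + d * b ^ 2 = (a - c * b) * (a + c * b) + (c ^ 2 + d) * b ^ 2 by ring]
    exact dvd_add (hdvd.mul_right _) (hc.mul_right _)
  have hpos : 0 < a ^ 2 + d * b ^ 2 := by rcases hab with h | h <;> positivity
  have hp0 : (0 : ℤ) < p := by exact_mod_cast hp.pos
  refine ⟨a, b, k, by nlinarith, by nlinarith, by rw [hk]; ring⟩

theorem exists_eq_sq_add_fifteen_sq_of_eq_four_mul {P x y : ℤ} (hP : P % 2 = 1)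
    (h : x ^ 2 + 15 * y ^ 2 = 4 * P) : ∃ a b : ℤ, P = a ^ 2 + 15 * b ^ 2 := by
  have hx₂ := Int.sq_emod_two x
  have hy₂ := Int.sq_emod_two y
  rcases Int.emod_two_eq x with hx | hx <;> rcases Int.emod_two_eq y with hy | hy
  · obtain ⟨a, rfl⟩ : 2 ∣ x := Int.dvd_of_emod_eq_zero hx
    obtain ⟨b, rfl⟩ : 2 ∣ y := Int.dvd_of_emod_eq_zero hy
    exact ⟨a, b, by linarith⟩
  · omega
  · omega
  · have := Int.sq_emod_eight_of_odd (Int.odd_iff.mpr hx)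
    have := Int.sq_emod_eight_of_odd (Int.odd_iff.mpr hy)
    omega

theorem exists_eq_sq_add_fifteen_sq_of_three_sq_add_five_sq_eq_two_mul {P u v : ℤ}
    (hP : P % 2 = 1) (h : 3 * u ^ 2 + 5 * v ^ 2 = 2 * P) : ∃ a b : ℤ, P = a ^ 2 + 15 * b ^ 2 := by
  have hu := Int.sq_emod_two u
  have hv := Int.sq_emod_two v
  obtain ⟨X, hX⟩ : 2 ∣ 3 * u + 5 * v := by omega
  obtain ⟨Y, hY⟩ : 2 ∣ u - v := by omega
  refine exists_eq_sq_add_fifteen_sq_of_eq_four_mul hP (x := X) (y := Y) ?_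
  have key : (3 * u + 5 * v) ^ 2 + 15 * (u - v) ^ 2 = 8 * (3 * u ^ 2 + 5 * v ^ 2) := by ring
  rw [hX, hY, h] at key
  linarith

theorem exists_eq_sq_add_fifteen_sq_of_eq_mul {P : ℤ} (hP : P % 2 = 1) (hP3 : P % 3 = 1)
    (hP5 : P % 5 = 1 ∨ P % 5 = 4) {x y k : ℤ} (hk : 0 < k) (hk15 : k ≤ 15)
    (h : x ^ 2 + 15 * y ^ 2 = k * P) :
    ∃ a b : ℤ, P = a ^ 2 + 15 * b ^ 2 := by
  have hx₃ := Int.sq_emod_three x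
  have hx₅ := Int.sq_emod_five x
  -- `x² ≡ kP` mod 3 and mod 5 rules out every other `k`
  interval_cases k <;> try omega
  · exact ⟨x, y, by linarith⟩
  · exact exists_eq_sq_add_fifteen_sq_of_eq_four_mul hP h
  · obtain ⟨u, rfl⟩ : 3 ∣ x := by omega
    exact exists_eq_sq_add_fifteen_sq_of_three_sq_add_five_sq_eq_two_mul hP (u := u) (v := y)
      (by linarith)
  · obtain ⟨u, rfl⟩ : 3 ∣ x := by omega
    have h' : 3 * u ^ 2 + 5 * y ^ 2 = 3 * P := by linarith
    have hy₃ := Int.sq_emod_three y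
    obtain ⟨v, rfl⟩ : 3 ∣ y := by omega
    exact ⟨u, v, by linarith⟩
  · obtain ⟨u, rfl⟩ : 5 ∣ x := by omega
    exact exists_eq_sq_add_fifteen_sq_of_three_sq_add_five_sq_eq_two_mul hP (u := y) (v := u)
      (by linarith)
  · obtain ⟨u, rfl⟩ : 15 ∣ x := by omega
    exact ⟨y, u, by linarith⟩

theorem isSquare_neg_fifteen {p : ℕ} [Fact p.Prime] (hp : p % 30 = 1 ∨ p % 30 = 19) :
    IsSquare ((-15 : ℤ) : ZMod p) := by
  apply ZMod.isSquare_of_jacobiSym_eq_one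
  rw [jacobiSym.mod_right _ (Nat.odd_iff.mpr (by omega))]
  have : p % 60 = 1 ∨ p % 60 = 19 ∨ p % 60 = 31 ∨ p % 60 = 49 := by omega
  rcases this with h | h | h | h <;> simp only [show 4 * (-15 : ℤ).natAbs = 60 by rfl, h] <;>
    norm_num

theorem exists_eq_sq_add_fifteen_sq {p : ℕ} (hp : p.Prime) (hp30 : p % 30 = 1 ∨ p % 30 = 19) :
    ∃ a b : ℤ, (p : ℤ) = a ^ 2 + 15 * b ^ 2 := by
  have := Fact.mk hp
  obtain ⟨r, hr⟩ := isSquare_neg_fifteen hp30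
  have hc : (p : ℤ) ∣ r.valMinAbs ^ 2 + 15 := by
    rw [← ZMod.intCast_zmod_eq_zero_iff_dvd]
    push_cast at hr ⊢
    linear_combination -hr
  obtain ⟨x, y, k, hk, hk15, h⟩ := exists_sq_add_mul_sq_eq_mul hp (by norm_num) hc
  exact exists_eq_sq_add_fifteen_sq_of_eq_mul (by omega) (by omega) (by omega) hk hk15 h

theorem sq_eq_of_three_sq_add_five_sq_eq_of_dvd {P a b x y : ℤ} (hP : Prime P) (hPx : ¬ P ∣ x)
    (hab : P = a ^ 2 + 15 * b ^ 2) (hxy : 3 * x ^ 2 + 5 * y ^ 2 = 8 * P)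
    (hdvd : P ∣ x * a + 5 * y * b) :
    (x ^ 2 = (a + 5 * b) ^ 2 ∧ y ^ 2 = (a - 3 * b) ^ 2) ∨
      (x ^ 2 = (a - 5 * b) ^ 2 ∧ y ^ 2 = (a + 3 * b) ^ 2) := by
  obtain ⟨C, hC⟩ := hdvd
  obtain ⟨D, hD⟩ : P ∣ y * a - 3 * x * b :=
    (hP.dvd_mul.mp ⟨y * C - 8 * b, by linear_combination (-b) * hxy + y * hC⟩).resolve_left hPx
  -- `3(xa + 5yb)² + 5(ya - 3xb)² = (3x² + 5y²)(a² + 15b²) = 8P²`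
  have hCD : 3 * C ^ 2 + 5 * D ^ 2 = 8 := by
    refine mul_left_cancel₀ (pow_ne_zero 2 hP.ne_zero) ?_
    linear_combination -3 * (x * a + 5 * y * b + P * C) * hC
      - 5 * (y * a - 3 * x * b + P * D) * hD - (3 * x ^ 2 + 5 * y ^ 2) * hab + P * hxy
  have hx : x = a * C - 5 * b * D := mul_right_cancel₀ hP.ne_zero <| by
    linear_combination a * hC - 5 * b * hD + x * hab
  have hy : y = 3 * b * C + a * D := mul_right_cancel₀ hP.ne_zero <| by
    linear_combination 3 * b * hC + a * hD + y * hab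
  have hC₁ : -1 ≤ C ∧ C ≤ 1 := ⟨by nlinarith [sq_nonneg D], by nlinarith [sq_nonneg D]⟩
  have hD₁ : -1 ≤ D ∧ D ≤ 1 := ⟨by nlinarith [sq_nonneg C], by nlinarith [sq_nonneg C]⟩
  subst hx hy
  obtain ⟨hC₀, hC₁⟩ := hC₁
  obtain ⟨hD₀, hD₁⟩ := hD₁
  interval_cases C <;> interval_cases D <;> first
    | exact Or.inl ⟨by ring1, by ring1⟩
    | exact Or.inr ⟨by ring1, by ring1⟩
    | norm_num at hCD

theorem sq_eq_of_three_sq_add_five_sq_eq {p : ℕ} (hp : p.Prime) (hp5 : 5 < p) {a b x y : ℤ}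
    (hab : (p : ℤ) = a ^ 2 + 15 * b ^ 2) (hxy : 3 * x ^ 2 + 5 * y ^ 2 = 8 * p) :
    (x ^ 2 = (a + 5 * b) ^ 2 ∧ y ^ 2 = (a - 3 * b) ^ 2) ∨
      (x ^ 2 = (a - 5 * b) ^ 2 ∧ y ^ 2 = (a + 3 * b) ^ 2) := by
  have hP : Prime (p : ℤ) := Nat.prime_iff_prime_int.mp hp
  have h3 : ¬ (p : ℤ) ∣ 3 := fun h => by have := Int.le_of_dvd (by norm_num) h; omega
  have h5 : ¬ (p : ℤ) ∣ 5 := fun h => by have := Int.le_of_dvd (by norm_num) h; omega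
  have h8 : ¬ (p : ℤ) ∣ 8 := fun h => by
    have : p ∣ 2 ^ 3 := by exact_mod_cast h
    have := (Nat.prime_dvd_prime_iff_eq hp Nat.prime_two).mp (hp.dvd_of_dvd_pow this)
    omega
  have hPx : ¬ (p : ℤ) ∣ x := by
    rintro ⟨e, rfl⟩
    have h5y : (p : ℤ) ∣ 5 * y ^ 2 := ⟨8 - 3 * p * e ^ 2, by linear_combination hxy⟩
    obtain ⟨f, rfl⟩ := hP.dvd_of_dvd_pow ((hP.dvd_mul.mp h5y).resolve_left h5)
    exact h8 ⟨3 * e ^ 2 + 5 * f ^ 2, mul_left_cancel₀ hP.ne_zero (by linear_combination -hxy)⟩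
  have hdvd : (p : ℤ) ∣ (x * a + 5 * y * b) * (x * a + 5 * y * -b) := by
    have : (p : ℤ) ∣ 3 * ((x * a + 5 * y * b) * (x * a + 5 * y * -b)) :=
      ⟨8 * a ^ 2 - 5 * y ^ 2, by linear_combination a ^ 2 * hxy + 5 * y ^ 2 * hab⟩
    exact (hP.dvd_mul.mp this).resolve_left h3
  rcases hP.dvd_mul.mp hdvd with h | h
  · exact sq_eq_of_three_sq_add_five_sq_eq_of_dvd hP hPx hab hxy h
  · rcases sq_eq_of_three_sq_add_five_sq_eq_of_dvd hP hPx (by rw [hab]; ring) hxy h with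
      ⟨hx, hy⟩ | ⟨hx, hy⟩
    · exact Or.inr ⟨by linear_combination hx, by linear_combination hy⟩
    · exact Or.inl ⟨by linear_combination hx, by linear_combination hy⟩

theorem emod_thirty_of_three_sq_add_five_sq_eq {p : ℕ} (hp : p.Prime) (hp5 : 5 < p) {x y : ℤ}
    (h : 3 * x ^ 2 + 5 * y ^ 2 = 8 * p) : p % 30 = 1 ∨ p % 30 = 19 := by
  have hodd := Nat.odd_iff.mp (hp.odd_of_ne_two (by omega))
  have h3 : ¬ 3 ∣ p := fun h => by rcases hp.eq_one_or_self_of_dvd 3 h with h | h <;> omega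
  have h5 : ¬ 5 ∣ p := fun h => by rcases hp.eq_one_or_self_of_dvd 5 h with h | h <;> omega
  have hy₃ := Int.sq_emod_three y
  have hx₅ := Int.sq_emod_five x
  omega

theorem add_five_mul_mul_sub_three_mul_emod_four {a b : ℤ} (h : (a ^ 2 + 15 * b ^ 2) % 2 = 1) :
    (a + 5 * b) * (a - 3 * b) % 4 = 1 := by
  have ha₂ := Int.sq_emod_two a
  have hb₂ := Int.sq_emod_two b
  rcases Int.emod_two_eq a with ha | ha
  · have hb : b ^ 2 % 4 = 1 := Int.sq_mod_four_eq_one_of_odd (Int.odd_iff.mpr (by omega))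
    obtain ⟨m, rfl⟩ : 2 ∣ a := Int.dvd_of_emod_eq_zero ha
    rw [show (2 * m + 5 * b) * (2 * m - 3 * b) = 4 * (m ^ 2 + m * b) - 15 * b ^ 2 by ring]
    omega
  · have ha : a ^ 2 % 4 = 1 := Int.sq_mod_four_eq_one_of_odd (Int.odd_iff.mpr ha)
    obtain ⟨n, rfl⟩ : 2 ∣ b := Int.dvd_of_emod_eq_zero (by omega)
    rw [show (a + 5 * (2 * n)) * (a - 3 * (2 * n)) = a ^ 2 + 4 * (a * n - 15 * n ^ 2) by ring]
    omega

theorem sub_five_mul_mul_add_three_mul_emod_four {a b : ℤ} (h : (a ^ 2 + 15 * b ^ 2) % 2 = 1) :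
    (a - 5 * b) * (a + 3 * b) % 4 = 1 := by
  have := add_five_mul_mul_sub_three_mul_emod_four (a := a) (b := -b) (by rwa [neg_sq])
  rwa [show (a + 5 * -b) * (a - 3 * -b) = (a - 5 * b) * (a + 3 * b) by ring] at this

def assocOneModFour (n : ℤ) : ℤ := if n % 4 = 1 then n else -n

lemma assocOneModFour_emod_four {n : ℤ} (hn : Odd n) : assocOneModFour n % 4 = 1 := by
  have := Int.odd_iff.mp hn
  unfold assocOneModFour
  split_ifs <;> omega

lemma sq_assocOneModFour (n : ℤ) : assocOneModFour n ^ 2 = n ^ 2 := by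
  unfold assocOneModFour
  split_ifs <;> ring

lemma eq_assocOneModFour_of_sq_eq {x n : ℤ} (hx : x % 4 = 1) (h : x ^ 2 = n ^ 2) :
    x = assocOneModFour n := by
  unfold assocOneModFour
  rcases sq_eq_sq_iff_eq_or_eq_neg.mp h with rfl | rfl <;> split_ifs <;> omega

lemma assocOneModFour_mul_assocOneModFour {u v : ℤ} (h : u * v % 4 = 1) :
    assocOneModFour u * assocOneModFour v = u * v := by
  have huv := Int.mul_emod u v 4
  unfold assocOneModFour
  split_ifs with hu hv hv
  · rfl
  · simp only [hu, one_mul, dvd_refl, Int.emod_emod_of_dvd] at huv; omega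
  · simp only [hv, mul_one, dvd_refl, Int.emod_emod_of_dvd] at huv; omega
  · ring

theorem solutions_three_five_eq {p : ℕ} (hp : p.Prime) (hp5 : 5 < p) {a b : ℤ}
    (hab : (p : ℤ) = a ^ 2 + 15 * b ^ 2) :
    {xy : ℤ × ℤ | xy.1 % 4 = 1 ∧ xy.2 % 4 = 1 ∧
      3 * xy.1 ^ 2 + 5 * xy.2 ^ 2 = 8 * ((p : ℤ) - 1) + 3 + 5} =
      {(assocOneModFour (a + 5 * b), assocOneModFour (a - 3 * b)),
        (assocOneModFour (a - 5 * b), assocOneModFour (a + 3 * b))} := by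
  have hodd : (a ^ 2 + 15 * b ^ 2) % 2 = 1 := by
    rw [← hab]; exact_mod_cast Nat.odd_iff.mp (hp.odd_of_ne_two (by omega))
  have h₁ := add_five_mul_mul_sub_three_mul_emod_four hodd
  have h₂ := sub_five_mul_mul_add_three_mul_emod_four hodd
  obtain ⟨o₁, o₂⟩ := Int.odd_mul.mp (Int.odd_iff.mpr (by omega :
    (a + 5 * b) * (a - 3 * b) % 2 = 1))
  obtain ⟨o₃, o₄⟩ := Int.odd_mul.mp (Int.odd_iff.mpr (by omega :
    (a - 5 * b) * (a + 3 * b) % 2 = 1))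
  ext ⟨x, y⟩
  simp only [Set.mem_ofPred_eq, Set.mem_insert_iff, Set.mem_singleton_iff, Prod.mk.injEq]
  constructor
  · rintro ⟨hx, hy, hxy⟩
    rcases sq_eq_of_three_sq_add_five_sq_eq hp hp5 hab (x := x) (y := y) (by linarith) with
      ⟨hx', hy'⟩ | ⟨hx', hy'⟩
    · exact Or.inl ⟨eq_assocOneModFour_of_sq_eq hx hx', eq_assocOneModFour_of_sq_eq hy hy'⟩
    · exact Or.inr ⟨eq_assocOneModFour_of_sq_eq hx hx', eq_assocOneModFour_of_sq_eq hy hy'⟩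
  · rintro (⟨rfl, rfl⟩ | ⟨rfl, rfl⟩)
    · refine ⟨assocOneModFour_emod_four o₁, assocOneModFour_emod_four o₂, ?_⟩
      rw [sq_assocOneModFour, sq_assocOneModFour]
      linear_combination (-8) * hab
    · refine ⟨assocOneModFour_emod_four o₃, assocOneModFour_emod_four o₄, ?_⟩
      rw [sq_assocOneModFour, sq_assocOneModFour]
      linear_combination (-8) * hab

theorem lam_three_five_eq {p : ℕ} (hp : p.Prime) (hp5 : 5 < p) {a b : ℤ}
    (hab : (p : ℤ) = a ^ 2 + 15 * b ^ 2) : lam 3 5 ((p : ℤ) - 1) = 4 * a ^ 2 - 2 * p := by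
  have hab_ne : a * b ≠ 0 := by
    intro h
    rcases mul_eq_zero.mp h with rfl | rfl
    · have : (3 : ℤ) ∣ p := ⟨5 * b ^ 2, by linear_combination hab⟩
      have : 3 ∣ p := by exact_mod_cast this
      rcases hp.eq_one_or_self_of_dvd 3 this with h | h <;> omega
    · exact hp.not_isSquare ⟨a.natAbs, by zify; simpa [sq] using hab⟩
  have hne : (assocOneModFour (a + 5 * b), assocOneModFour (a - 3 * b)) ≠
      (assocOneModFour (a - 5 * b), assocOneModFour (a + 3 * b)) := fun h => by
    have := congrArg (fun xy => xy.1 ^ 2) h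
    simp only [sq_assocOneModFour] at this
    exact hab_ne (by linarith)
  have hodd : (a ^ 2 + 15 * b ^ 2) % 2 = 1 := by
    rw [← hab]; exact_mod_cast Nat.odd_iff.mp (hp.odd_of_ne_two (by omega))
  rw [lam, solutions_three_five_eq hp hp5 hab, finsum_mem_pair hne,
    assocOneModFour_mul_assocOneModFour (add_five_mul_mul_sub_three_mul_emod_four hodd),
    assocOneModFour_mul_assocOneModFour (sub_five_mul_mul_add_three_mul_emod_four hodd)]
  linear_combination 2 * hab

theorem stmt15 (p : ℕ) (hp : p.Prime) (hp5 : 5 < p) :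
    (¬ (p % 30 = 1 ∨ p % 30 = 19) → lam 3 5 ((p : ℤ) - 1) = 0) ∧
    ((p % 30 = 1 ∨ p % 30 = 19) →
      (∃ x y : ℤ, (p : ℤ) = x ^ 2 + 15 * y ^ 2) ∧
      ∀ x y : ℤ, (p : ℤ) = x ^ 2 + 15 * y ^ 2 →
        lam 3 5 ((p : ℤ) - 1) = 4 * x ^ 2 - 2 * (p : ℤ)) := by
  refine ⟨fun hp30 => finsum_mem_of_eqOn_zero fun xy hxy => ?_,
    fun hp30 => ⟨exists_eq_sq_add_fifteen_sq hp hp30, fun x y => lam_three_five_eq hp hp5⟩⟩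
  exact absurd (emod_thirty_of_three_sq_add_five_sq_eq hp hp5 (x := xy.1) (y := xy.2)
    (by linarith [hxy.2.2])) hp30
end

section
/- Let p > 5 be a prime. If p ≢ 17 and p ≢ 23 (mod 30), then λ(3, 5; 2p) = 0. If p ≡ 17 or 23 (mod 30), then there exist integers x, y with p = 3x² + 5y², and for any such x, y one has λ(3, 5; 2p) = 2p − 12x². -/
set_option maxHeartbeats 1000000

private lemma sqmod (n : ℤ) (s : ℤ) : (s % n)^2 % n = s^2 % n :=
  Int.ModEq.pow 2 (Int.emod_emod_of_dvd s dvd_rfl)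

private lemma sq3 (s : ℤ) : s^2 % 3 = 0 ∨ s^2 % 3 = 1 := by
  have h2 := sqmod 3 s
  have h : s % 3 = 0 ∨ s % 3 = 1 ∨ s % 3 = 2 := by omega
  rcases h with h|h|h <;> rw [h] at h2 <;> norm_num at h2 <;> omega

private lemma sq5 (s : ℤ) : s^2 % 5 = 0 ∨ s^2 % 5 = 1 ∨ s^2 % 5 = 4 := by
  have h2 := sqmod 5 s
  have h : s % 5 = 0 ∨ s % 5 = 1 ∨ s % 5 = 2 ∨ s % 5 = 3 ∨ s % 5 = 4 := by omega
  rcases h with h|h|h|h|h <;> rw [h] at h2 <;> norm_num at h2 <;> omega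

private lemma sq16 (s : ℤ) :
    (s % 2 = 0 ∧ (s^2 % 16 = 0 ∨ s^2 % 16 = 4)) ∨
    (s % 2 = 1 ∧ (s^2 % 16 = 1 ∨ s^2 % 16 = 9)) := by
  have h2 := sqmod 16 s
  have h : s % 16 = 0 ∨ s % 16 = 1 ∨ s % 16 = 2 ∨ s % 16 = 3 ∨ s % 16 = 4 ∨ s % 16 = 5 ∨
      s % 16 = 6 ∨ s % 16 = 7 ∨ s % 16 = 8 ∨ s % 16 = 9 ∨ s % 16 = 10 ∨ s % 16 = 11 ∨
      s % 16 = 12 ∨ s % 16 = 13 ∨ s % 16 = 14 ∨ s % 16 = 15 := by omega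
  rcases h with h|h|h|h|h|h|h|h|h|h|h|h|h|h|h|h <;> rw [h] at h2 <;> norm_num at h2 <;> omega

private lemma pick (w x : ℤ) (hw : w % 2 = 1) (hx : x = w ∨ x = -w) (h1 : x % 4 = 1) :
    x = if w % 4 = 1 then w else -w := by
  rcases hx with rfl|rfl <;> split <;> omega

/-- structure of odd solutions of 3x²+5y² = 16P -/
private lemma struct (P x y : ℤ) (hP : P % 2 = 1) (hx : x % 2 = 1) (hy : y % 2 = 1)
    (h : 3*x^2 + 5*y^2 = 16*P) :
    ∃ a b : ℤ, P = 3*a^2 + 5*b^2 ∧ x = a + 5*b ∧ (y = 3*a - b ∨ y = b - 3*a) := by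
  have hy2 : y^2 % 2 = 1 := by rcases sq16 y with ⟨h1,_⟩|⟨_,h2⟩ <;> omega
  have hx2 : x^2 % 2 = 1 := by rcases sq16 x with ⟨h1,_⟩|⟨_,h2⟩ <;> omega
  obtain ⟨e, he⟩ : (2:ℤ) ∣ (P - 5*y^2) := by omega
  have h3 : 3*((x+5*y)*(x-5*y)) = 32*e := by linear_combination h + 16*he
  obtain ⟨f, hf⟩ : (3:ℤ) ∣ e := by
    have h32 : (3:ℤ) ∣ 32*e := ⟨(x+5*y)*(x-5*y), by linarith⟩
    omega
  have key3 : (x+5*y)*(x-5*y) = 32*f := by rw [hf] at h3; linarith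
  have hAB4 : ((x+5*y) % 4 = 0 ∧ (x-5*y) % 4 = 2) ∨ ((x+5*y) % 4 = 2 ∧ (x-5*y) % 4 = 0) := by
    omega
  rcases hAB4 with ⟨hA4, hB4⟩|⟨hA4, hB4⟩
  · obtain ⟨C, hC⟩ : (4:ℤ) ∣ x+5*y := by omega
    obtain ⟨D, hD⟩ : (2:ℤ) ∣ x-5*y := by omega
    have hDodd : D % 2 = 1 := by omega
    have h8 : 8*(C*D) = 32*f := by linear_combination key3 - (x-5*y)*hC - 4*C*hD
    have hCD : C*D = 4*f := by linarith
    have h4C : C % 4 = 0 := by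
      have hmm := Int.mul_emod C D 4
      have hD4 : D % 4 = 1 ∨ D % 4 = 3 := by omega
      have hC4 : C % 4 = 0 ∨ C % 4 = 1 ∨ C % 4 = 2 ∨ C % 4 = 3 := by omega
      rcases hD4 with h'|h' <;> rcases hC4 with h''|h''|h''|h'' <;>
        rw [h', h''] at hmm <;> norm_num at hmm <;> omega
    obtain ⟨a, ha⟩ : (16:ℤ) ∣ x+5*y := by omega
    have hxa : x = 16*a - 5*y := by omega
    refine ⟨a, 3*a - y, ?_, by omega, Or.inl (by ring)⟩
    have h16 : 16*P = 48*a^2 + 80*(3*a-y)^2 := by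
      linear_combination (-1)*h + 3*(x + 16*a - 5*y)*hxa
    linarith
  · obtain ⟨C, hC⟩ : (4:ℤ) ∣ x-5*y := by omega
    obtain ⟨D, hD⟩ : (2:ℤ) ∣ x+5*y := by omega
    have hDodd : D % 2 = 1 := by omega
    have h8 : 8*(C*D) = 32*f := by linear_combination key3 - (x+5*y)*hC - 4*C*hD
    have hCD : C*D = 4*f := by linarith
    have h4C : C % 4 = 0 := by
      have hmm := Int.mul_emod C D 4
      have hD4 : D % 4 = 1 ∨ D % 4 = 3 := by omega
      have hC4 : C % 4 = 0 ∨ C % 4 = 1 ∨ C % 4 = 2 ∨ C % 4 = 3 := by omega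
      rcases hD4 with h'|h' <;> rcases hC4 with h''|h''|h''|h'' <;>
        rw [h', h''] at hmm <;> norm_num at hmm <;> omega
    obtain ⟨a, ha⟩ : (16:ℤ) ∣ x-5*y := by omega
    have hxa : x = 16*a + 5*y := by omega
    refine ⟨a, 3*a + y, ?_, by omega, Or.inr (by ring)⟩
    have h16 : 16*P = 48*a^2 + 80*(3*a+y)^2 := by
      linear_combination (-1)*h + 3*(x + 16*a + 5*y)*hxa
    linarith

private lemma small_not_dvd (P : ℤ) (hP : Prime P) (h5 : 5 < P) (q : ℤ) (hq : Prime q)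
    (hq5 : 0 < q ∧ q ≤ 5) : ¬ q ∣ P := by
  rintro ⟨k, rfl⟩
  rcases hP.irreducible.isUnit_or_isUnit rfl with h|h
  · exact hq.not_unit h
  · rcases Int.isUnit_iff.mp h with rfl|rfl <;> omega

/-- uniqueness of representation P = 3a²+5b² up to signs of a,b -/
private lemma uniq (P a b c d : ℤ) (hP : Prime P) (h5 : 5 < P)
    (h1 : P = 3*a^2 + 5*b^2) (h2 : P = 3*c^2 + 5*d^2) : a^2 = c^2 ∧ b^2 = d^2 := by
  have id1 : (3*a*c+5*b*d)^2 + 15*(a*d-b*c)^2 = P^2 := by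
    linear_combination (-P)*h2 - (3*c^2+5*d^2)*h1
  have id2 : (3*a*c-5*b*d)^2 + 15*(a*d+b*c)^2 = P^2 := by
    linear_combination (-P)*h2 - (3*c^2+5*d^2)*h1
  have hdvd : P ∣ 3*((a*d-b*c)*(a*d+b*c)) :=
    ⟨d^2 - b^2, by linear_combination b^2*h2 - d^2*h1⟩
  have hP3 : ¬ (P ∣ 3) := fun hd => by have := Int.le_of_dvd (by norm_num) hd; omega
  have key : a*d - b*c = 0 ∨ a*d + b*c = 0 := by
    rcases (hP.dvd_mul.mp hdvd) with h|h
    · exact absurd h hP3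
    rcases hP.dvd_mul.mp h with h|h
    · left
      refine Int.eq_zero_of_abs_lt_dvd h ?_
      have h1' : 15*(a*d-b*c)^2 ≤ P^2 := by nlinarith [sq_nonneg (3*a*c+5*b*d)]
      have hlt : (a*d-b*c)^2 < P^2 := by nlinarith
      have hPpos : 0 < P := by omega
      rw [abs_lt]
      constructor <;> nlinarith [hlt]
    · right
      refine Int.eq_zero_of_abs_lt_dvd h ?_
      have h1' : 15*(a*d+b*c)^2 ≤ P^2 := by nlinarith [sq_nonneg (3*a*c-5*b*d)]
      have hlt : (a*d+b*c)^2 < P^2 := by nlinarith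
      have hPpos : 0 < P := by omega
      rw [abs_lt]
      constructor <;> nlinarith [hlt]
  have hnz : P ≠ 0 := by omega
  have hsq : b^2 = d^2 := by
    rcases key with h|h
    · have had : a*d = b*c := by linarith
      have : P * d^2 = P * b^2 := by
        calc P * d^2 = 3*(a*d)^2 + 5*b^2*d^2 := by linear_combination d^2*h1
        _ = 3*(b*c)^2 + 5*b^2*d^2 := by rw [had]
        _ = P * b^2 := by linear_combination (-(b^2))*h2
      exact (mul_left_cancel₀ hnz this).symm
    · have had : a*d = -(b*c) := by linarith
      have : P * d^2 = P * b^2 := by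
        calc P * d^2 = 3*(a*d)^2 + 5*b^2*d^2 := by linear_combination d^2*h1
        _ = 3*(-(b*c))^2 + 5*b^2*d^2 := by rw [had]
        _ = P * b^2 := by linear_combination (-(b^2))*h2
      exact (mul_left_cancel₀ hnz this).symm
  exact ⟨by linarith, hsq⟩

/-- a representation forces P ≡ 17 or 23 mod 30 -/
private lemma repmod (P a b : ℤ) (hP : Prime P) (h5 : 5 < P) (h : P = 3*a^2+5*b^2) :
    P % 30 = 17 ∨ P % 30 = 23 := by
  have h2 : ¬ (2:ℤ) ∣ P := small_not_dvd P hP h5 2 Int.prime_two (by norm_num)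
  have h3 : ¬ (3:ℤ) ∣ P := small_not_dvd P hP h5 3 Int.prime_three (by norm_num)
  have h5' : ¬ (5:ℤ) ∣ P := small_not_dvd P hP h5 5 (by norm_num) (by norm_num)
  have hb3 : b^2 % 3 = 1 := by rcases sq3 b with h'|h' <;> omega
  have ha5 : a^2 % 5 = 1 ∨ a^2 % 5 = 4 := by rcases sq5 a with h'|h'|h' <;> omega
  omega

/-- any solution of 3x²+5y² = 16P yields a representation of P -/
private lemma rep16 (P : ℤ) (hP : P % 2 = 1) (x y : ℤ) (h : 3*x^2 + 5*y^2 = 16*P) :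
    ∃ a b : ℤ, P = 3*a^2 + 5*b^2 := by
  rcases sq16 x with ⟨hx, hx2⟩|⟨hx, hx2⟩ <;> rcases sq16 y with ⟨hy, hy2⟩|⟨hy, hy2⟩
  · -- both even
    obtain ⟨x', rfl⟩ : (2:ℤ) ∣ x := by omega
    obtain ⟨y', rfl⟩ : (2:ℤ) ∣ y := by omega
    have h4 : 3*x'^2 + 5*y'^2 = 4*P := by linarith [h]
    rcases sq16 x' with ⟨hx', hx2'⟩|⟨hx', hx2'⟩ <;> rcases sq16 y' with ⟨hy', hy2'⟩|⟨hy', hy2'⟩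
    · obtain ⟨x'', rfl⟩ : (2:ℤ) ∣ x' := by omega
      obtain ⟨y'', rfl⟩ : (2:ℤ) ∣ y' := by omega
      exact ⟨x'', y'', by linarith [h4]⟩
    · omega
    · omega
    · omega
  · omega
  · omega
  · obtain ⟨a, b, hab, _, _⟩ := struct P x y hP hx hy h
    exact ⟨a, b, hab⟩

private lemma isSq_neg15 (p : ℕ) (hp : p.Prime) (hmod : p % 30 = 17 ∨ p % 30 = 23) :
    IsSquare ((-15 : ℤ) : ZMod p) := by
  haveI : Fact p.Prime := ⟨hp⟩
  have hodd : Odd p := by rcases hmod with h|h <;> exact Nat.odd_iff.mpr (by omega)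
  have hne : ((-15 : ℤ) : ZMod p) ≠ 0 := by
    rw [Ne, ZMod.intCast_zmod_eq_zero_iff_dvd]
    intro hd
    have h15 : (p:ℤ) ∣ 15 := by
      rcases hd with ⟨k, hk⟩
      exact ⟨-k, by linarith⟩
    have := Int.le_of_dvd (by norm_num) h15
    omega
  rw [← legendreSym.eq_one_iff p hne, jacobiSym.legendreSym.to_jacobiSym]
  have hsplit : jacobiSym (-15) p = jacobiSym (-1) p * jacobiSym 15 p := by
    rw [← jacobiSym.mul_left]; norm_num
  have hm1 : jacobiSym (-1) p = ZMod.χ₄ p := jacobiSym.at_neg_one hodd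
  have h15 : jacobiSym 15 p = (-1)^(7 * (p/2)) * jacobiSym p 15 := by
    have := jacobiSym.quadratic_reciprocity (a := 15) (b := p) (by decide) hodd
    simpa using this
  have hp15 : jacobiSym (p : ℤ) 15 = 1 := by
    rw [jacobiSym.mod_left]
    have : ((p : ℤ) % (15:ℕ)) = 2 ∨ ((p:ℤ) % (15:ℕ)) = 8 := by
      push_cast
      omega
    rcases this with h|h <;> rw [h] <;> norm_num
  rw [hsplit, hm1, h15, hp15, ZMod.χ₄_nat_eq_if_mod_four]
  have hp4 : p % 4 = 1 ∨ p % 4 = 3 := by omega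
  rcases hp4 with h|h
  · have he : (7 * (p/2)) % 2 = 0 := by omega
    rw [if_neg (by omega), if_pos h, Even.neg_one_pow (Nat.even_iff.mpr (by omega))]
    norm_num
  · have he : (7 * (p/2)) % 2 = 1 := by omega
    rw [if_neg (by omega), if_neg (by omega), Odd.neg_one_pow (Nat.odd_iff.mpr (by omega))]
    norm_num

private lemma exists_rep (p : ℕ) (hp : p.Prime) (hp5 : 5 < p)
    (hmod : p % 30 = 17 ∨ p % 30 = 23) : ∃ a b : ℤ, (p:ℤ) = 3*a^2 + 5*b^2 := by
  haveI : Fact p.Prime := ⟨hp⟩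
  obtain ⟨m, hm⟩ := isSq_neg15 p hp hmod
  -- pigeonhole
  set n := p.sqrt with hn
  have hcard : Fintype.card (ZMod p) < Fintype.card (Fin (n+1) × Fin (n+1)) := by
    rw [ZMod.card, Fintype.card_prod, Fintype.card_fin]
    have := Nat.lt_succ_sqrt' p
    nlinarith [this]
  obtain ⟨⟨i, j⟩, ⟨i', j'⟩, hne, heq⟩ :=
    Fintype.exists_ne_map_eq_of_card_lt
      (fun q : Fin (n+1) × Fin (n+1) => ((q.1 : ℕ) : ZMod p) + m * ((q.2 : ℕ) : ZMod p)) hcard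
  set s : ℤ := (i : ℕ) - (i' : ℕ) with hs
  set t : ℤ := (j' : ℕ) - (j : ℕ) with ht
  have heq' : ((i:ℕ):ZMod p) + m*((j:ℕ):ZMod p) = ((i':ℕ):ZMod p) + m*((j':ℕ):ZMod p) := heq
  have hst : ((s : ZMod p)) = m * ((t : ZMod p)) := by
    push_cast [hs, ht]
    linear_combination heq'
  have hdvd : (p:ℤ) ∣ s^2 + 15*t^2 := by
    rw [← ZMod.intCast_zmod_eq_zero_iff_dvd]
    push_cast
    rw [hst]
    linear_combination (-(t:ZMod p)^2) * hm
  -- bounds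
  have his : i.val ≤ n := Nat.lt_succ_iff.mp i.isLt
  have his' : i'.val ≤ n := Nat.lt_succ_iff.mp i'.isLt
  have hjs : j.val ≤ n := Nat.lt_succ_iff.mp j.isLt
  have hjs' : j'.val ≤ n := Nat.lt_succ_iff.mp j'.isLt
  have hn2 : (n:ℤ)*(n:ℤ) ≤ (p:ℤ) - 1 := by
    have h1 : n*n ≤ p := by simpa [pow_two] using Nat.sqrt_le' p
    have h2 : n*n ≠ p := by
      intro hE
      have hge : 2 ≤ n := by nlinarith
      rcases (Nat.Prime.eq_one_or_self_of_dvd hp n ⟨n, hE.symm⟩) with h|h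
      · omega
      · rw [h] at hE; nlinarith
    have h3 : ((n*n : ℕ) : ℤ) < ((p:ℕ):ℤ) := by exact_mod_cast lt_of_le_of_ne h1 h2
    push_cast at h3
    linarith
  have hsb : s^2 ≤ (n:ℤ)*(n:ℤ) := by
    have h1 : -(n:ℤ) ≤ s := by simp [hs]; omega
    have h2 : s ≤ (n:ℤ) := by simp [hs]; omega
    nlinarith
  have htb : t^2 ≤ (n:ℤ)*(n:ℤ) := by
    have h1 : -(n:ℤ) ≤ t := by simp [ht]; omega
    have h2 : t ≤ (n:ℤ) := by simp [ht]; omega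
    nlinarith
  have h0 : s ≠ 0 ∨ t ≠ 0 := by
    by_contra hc
    push_neg at hc
    apply hne
    have h1 : i = i' := Fin.ext (by omega)
    have h2 : j = j' := Fin.ext (by omega)
    rw [h1, h2]
  have hub : s^2 + 15*t^2 ≤ 16*(p:ℤ) - 16 := by nlinarith
  obtain ⟨k, hk⟩ := hdvd
  clear_value s t
  clear hs ht heq heq' hst hcard hne hm hsb htb hn2 his his' hjs hjs' m i j i' j'
  clear hn n
  have hpos : 0 < s^2 + 15*t^2 := by
    rcases h0 with h|h
    · nlinarith [sq_nonneg t, sq_abs s, Int.one_le_abs h]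
    · nlinarith [sq_nonneg s, sq_abs t, Int.one_le_abs h]
  have hppos : (0:ℤ) < p := by positivity
  have hk1 : 1 ≤ k := by nlinarith [hk, hpos, hppos]
  have hk15 : k ≤ 15 := by nlinarith [hub, hppos, hk]
  -- congruence facts
  have hP30 : (p:ℤ) % 30 = 17 ∨ (p:ℤ) % 30 = 23 := by omega
  have hPodd : (p:ℤ) % 2 = 1 := by omega
  clear hpos hub h0 hmod hp5
  interval_cases k
  · -- k = 1
    have hs3 := sq3 s
    exfalso; omega
  · -- k = 2
    have hs16 := sq16 s; have ht16 := sq16 t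
    exfalso; omega
  · -- k = 3
    obtain ⟨w, rfl⟩ : (3:ℤ) ∣ s :=
      Int.prime_three.dvd_of_dvd_pow (n := 2) ⟨(p:ℤ) - 5*t^2, by linarith⟩
    exact ⟨w, t, by linarith⟩
  · -- k = 4
    have hs3 := sq3 s
    exfalso; omega
  · -- k = 5
    obtain ⟨w, rfl⟩ : (5:ℤ) ∣ s :=
      (by norm_num : Prime (5:ℤ)).dvd_of_dvd_pow (n := 2) ⟨(p:ℤ) - 3*t^2, by linarith⟩
    exact ⟨t, w, by linarith⟩
  · -- k = 6
    have hs5 := sq5 s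
    exfalso; omega
  · -- k = 7
    have hs3 := sq3 s
    exfalso; omega
  · -- k = 8
    rcases sq16 s with ⟨hse, hs16'⟩|⟨hso, hs16'⟩ <;> rcases sq16 t with ⟨hte, ht16'⟩|⟨hto, ht16'⟩
    · -- both even: reduce to 2p, contradiction
      obtain ⟨s', rfl⟩ : (2:ℤ) ∣ s := by omega
      obtain ⟨t', rfl⟩ : (2:ℤ) ∣ t := by omega
      have h2p : s'^2 + 15*t'^2 = 2*(p:ℤ) := by nlinarith [hk]
      have hA := sq16 s'; have hB := sq16 t'
      exfalso
      clear hk hs16' ht16' hse hte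
      omega
    · exfalso; omega
    · exfalso; omega
    · -- both odd
      obtain ⟨x, hx⟩ : (2:ℤ) ∣ s + 5*t := by omega
      obtain ⟨y, hy⟩ : (2:ℤ) ∣ s - 3*t := by omega
      have h1 : s = 2*x - 5*t := by omega
      have h2 : y = x - 4*t := by omega
      rw [h1] at hk
      have heq16 : 3*x^2 + 5*y^2 = 16*(p:ℤ) := by rw [h2]; linear_combination 2*hk
      exact rep16 _ hPodd x y heq16
  · -- k = 9
    have hs5 := sq5 s
    exfalso; omega
  · -- k = 10
    have hs3 := sq3 s
    exfalso; omega
  · -- k = 11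
    have hs5 := sq5 s
    exfalso; omega
  · -- k = 12
    rcases sq16 s with ⟨hse, hs16'⟩|⟨hso, hs16'⟩ <;> rcases sq16 t with ⟨hte, ht16'⟩|⟨hto, ht16'⟩
    · obtain ⟨s', rfl⟩ : (2:ℤ) ∣ s := by omega
      obtain ⟨t', rfl⟩ : (2:ℤ) ∣ t := by omega
      have h3p : s'^2 + 15*t'^2 = 3*(p:ℤ) := by nlinarith [hk]
      obtain ⟨w, rfl⟩ : (3:ℤ) ∣ s' :=
        Int.prime_three.dvd_of_dvd_pow (n := 2) ⟨(p:ℤ) - 5*t'^2, by linarith⟩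
      exact ⟨w, t', by linarith⟩
    · exfalso; omega
    · exfalso; omega
    · exfalso; omega
  · -- k = 13
    have hs3 := sq3 s
    exfalso; omega
  · -- k = 14
    have hs5 := sq5 s
    exfalso; omega
  · -- k = 15
    obtain ⟨s₁, rfl⟩ : (3:ℤ) ∣ s :=
      Int.prime_three.dvd_of_dvd_pow (n := 2) ⟨5*(p:ℤ) - 5*t^2, by linarith⟩
    have h5d : (5:ℤ) ∣ 3*s₁^2 := ⟨(p:ℤ) - t^2, by linarith⟩
    obtain ⟨w, rfl⟩ : (5:ℤ) ∣ s₁ := by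
      rcases (by norm_num : Prime (5:ℤ)).dvd_mul.mp h5d with h|h
      · norm_num at h
      · exact (by norm_num : Prime (5:ℤ)).dvd_of_dvd_pow h
    have hfin : (p:ℤ) = 15*w^2 + t^2 := by nlinarith [hk]
    have ht3 := sq3 t
    exfalso
    clear hk h5d
    omega

theorem stmt16 (p : ℕ) (hp : p.Prime) (hp5 : 5 < p) :
    (¬ (p % 30 = 17 ∨ p % 30 = 23) → lam 3 5 (2 * (p : ℤ) - 1) = 0) ∧
    ((p % 30 = 17 ∨ p % 30 = 23) →
      (∃ x y : ℤ, (p : ℤ) = 3 * x ^ 2 + 5 * y ^ 2) ∧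
      ∀ x y : ℤ, (p : ℤ) = 3 * x ^ 2 + 5 * y ^ 2 →
        lam 3 5 (2 * (p : ℤ) - 1) = 2 * (p : ℤ) - 12 * x ^ 2) := by
  have hP : Prime ((p:ℕ):ℤ) := Nat.prime_iff_prime_int.mp hp
  have hp5' : (5:ℤ) < (p:ℕ) := by exact_mod_cast hp5
  have hPodd : ((p:ℕ):ℤ) % 2 = 1 := by
    have h2 : p % 2 = 1 := Nat.odd_iff.mp (hp.odd_of_ne_two (by omega))
    omega
  constructor
  · -- non-representable case
    intro hno
    have hset : {xy : ℤ × ℤ | xy.1 % 4 = 1 ∧ xy.2 % 4 = 1 ∧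
        3 * xy.1 ^ 2 + 5 * xy.2 ^ 2 = 8 * (2 * (p:ℤ) - 1) + 3 + 5} = (∅ : Set (ℤ × ℤ)) := by
      rw [Set.eq_empty_iff_forall_notMem]
      rintro ⟨x, y⟩ ⟨hx4, hy4, hxy⟩
      have heq : 3*x^2 + 5*y^2 = 16*((p:ℕ):ℤ) := by linarith
      obtain ⟨a, b, hab, _, _⟩ := struct _ x y hPodd (by omega) (by omega) heq
      have := repmod _ a b hP hp5' hab
      omega
    unfold lam
    rw [hset]
    exact finsum_mem_empty
  · intro hmod
    refine ⟨by
      obtain ⟨a0, b0, h0⟩ := exists_rep p hp hp5 hmod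
      exact ⟨a0, b0, h0⟩, ?_⟩
    intro a b hab
    -- basic facts
    have ha0 : a ≠ 0 := by
      rintro rfl
      exact small_not_dvd _ hP hp5' 5 (by norm_num) (by norm_num)
        ⟨b^2, by linarith [hab]⟩
    have hb0 : b ≠ 0 := by
      rintro rfl
      exact small_not_dvd _ hP hp5' 3 Int.prime_three (by norm_num)
        ⟨a^2, by linarith [hab]⟩
    have hA16 := sq16 a
    have hB16 := sq16 b
    have hpar : (a % 2 = 1 ∧ b % 2 = 0) ∨ (a % 2 = 0 ∧ b % 2 = 1) := by omega
    have hu_odd : (a+5*b) % 2 = 1 := by omega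
    have hv_odd : (3*a-b) % 2 = 1 := by omega
    have hu'_odd : (a-5*b) % 2 = 1 := by omega
    have hv'_odd : (3*a+b) % 2 = 1 := by omega
    -- products are 3 mod 4
    have hCpar : (a*b) % 2 = 0 := by
      rcases hpar with ⟨h1, h2⟩|⟨h1, h2⟩ <;> rw [Int.mul_emod, h1, h2] <;> norm_num
    have huv : ((a+5*b)*(3*a-b)) % 4 = 3 := by
      have hexp : (a+5*b)*(3*a-b) = 3*a^2 + 14*(a*b) - 5*b^2 := by ring
      generalize hW : (a+5*b)*(3*a-b) = W at hexp ⊢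
      generalize (a:ℤ)^2 = A at hexp hA16
      generalize (b:ℤ)^2 = B at hexp hB16
      generalize (a*b : ℤ) = C at hexp hCpar
      omega
    have hu'v' : ((a-5*b)*(3*a+b)) % 4 = 3 := by
      have hexp : (a-5*b)*(3*a+b) = 3*a^2 - 14*(a*b) - 5*b^2 := by ring
      generalize hW : (a-5*b)*(3*a+b) = W at hexp ⊢
      generalize (a:ℤ)^2 = A at hexp hA16
      generalize (b:ℤ)^2 = B at hexp hB16
      generalize (a*b : ℤ) = C at hexp hCpar
      omega
    -- the two elements
    set x1 := (if (a+5*b) % 4 = 1 then a+5*b else -(a+5*b)) with hx1def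
    set y1 := (if (3*a-b) % 4 = 1 then 3*a-b else -(3*a-b)) with hy1def
    set x2 := (if (a-5*b) % 4 = 1 then a-5*b else -(a-5*b)) with hx2def
    set y2 := (if (3*a+b) % 4 = 1 then 3*a+b else -(3*a+b)) with hy2def
    have hx1mod : x1 % 4 = 1 := by rw [hx1def]; split <;> omega
    have hy1mod : y1 % 4 = 1 := by rw [hy1def]; split <;> omega
    have hx2mod : x2 % 4 = 1 := by rw [hx2def]; split <;> omega
    have hy2mod : y2 % 4 = 1 := by rw [hy2def]; split <;> omega
    have hx1sq : x1^2 = (a+5*b)^2 := by rw [hx1def]; split <;> ring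
    have hy1sq : y1^2 = (3*a-b)^2 := by rw [hy1def]; split <;> ring
    have hx2sq : x2^2 = (a-5*b)^2 := by rw [hx2def]; split <;> ring
    have hy2sq : y2^2 = (3*a+b)^2 := by rw [hy2def]; split <;> ring
    have hxy1 : x1*y1 = -((a+5*b)*(3*a-b)) := by
      have halt : x1*y1 = (a+5*b)*(3*a-b) ∨ x1*y1 = -((a+5*b)*(3*a-b)) := by
        rw [hx1def, hy1def]
        split <;> split
        · exact Or.inl rfl
        · exact Or.inr (by ring)
        · exact Or.inr (by ring)
        · exact Or.inl (by ring)
      have hm : (x1*y1) % 4 = 1 := by rw [Int.mul_emod, hx1mod, hy1mod]; norm_num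
      rcases halt with h|h
      · exfalso; rw [h] at hm; omega
      · exact h
    have hxy2 : x2*y2 = -((a-5*b)*(3*a+b)) := by
      have halt : x2*y2 = (a-5*b)*(3*a+b) ∨ x2*y2 = -((a-5*b)*(3*a+b)) := by
        rw [hx2def, hy2def]
        split <;> split
        · exact Or.inl rfl
        · exact Or.inr (by ring)
        · exact Or.inr (by ring)
        · exact Or.inl (by ring)
      have hm : (x2*y2) % 4 = 1 := by rw [Int.mul_emod, hx2mod, hy2mod]; norm_num
      rcases halt with h|h
      · exfalso; rw [h] at hm; omega
      · exact h
    -- distinctness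
    have hne12 : ((x1, y1) : ℤ × ℤ) ≠ (x2, y2) := by
      intro hE
      have h1 : x1 = x2 := congrArg Prod.fst hE
      have h2 : x1^2 = x2^2 := by rw [h1]
      rw [hx1sq, hx2sq] at h2
      have h3 : 20*(a*b) = 0 := by linear_combination h2
      have h4 : a*b = 0 := by linarith
      rcases mul_eq_zero.mp h4 with h|h
      · exact ha0 h
      · exact hb0 h
    -- set equality
    have hseteq : {xy : ℤ × ℤ | xy.1 % 4 = 1 ∧ xy.2 % 4 = 1 ∧
        3 * xy.1 ^ 2 + 5 * xy.2 ^ 2 = 8 * (2 * (p:ℤ) - 1) + 3 + 5} =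
        ({(x1, y1), (x2, y2)} : Set (ℤ × ℤ)) := by
      ext ⟨x, y⟩
      simp only [Set.mem_setOf_eq, Set.mem_insert_iff, Set.mem_singleton_iff, Prod.mk.injEq]
      constructor
      · rintro ⟨hx4, hy4, hxy⟩
        have heq : 3*x^2 + 5*y^2 = 16*((p:ℕ):ℤ) := by linarith
        obtain ⟨a', b', hab', hxe, hye⟩ := struct _ x y hPodd (by omega) (by omega) heq
        obtain ⟨hA2, hB2⟩ := uniq _ a' b' a b hP hp5' hab' hab
        have ha' : a' = a ∨ a' = -a := by
          have h0 : (a' - a)*(a' + a) = 0 := by linear_combination hA2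
          rcases mul_eq_zero.mp h0 with h|h
          · exact Or.inl (by linarith)
          · exact Or.inr (by linarith)
        have hb' : b' = b ∨ b' = -b := by
          have h0 : (b' - b)*(b' + b) = 0 := by linear_combination hB2
          rcases mul_eq_zero.mp h0 with h|h
          · exact Or.inl (by linarith)
          · exact Or.inr (by linarith)
        rcases ha' with ha'|ha' <;> rcases hb' with hb'|hb'
        · -- (a, b) : element 1
          left
          have hx' : x = (a+5*b) ∨ x = -(a+5*b) := Or.inl (by linarith)
          have hy' : y = (3*a-b) ∨ y = -(3*a-b) := by
            rcases hye with h|h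
            · exact Or.inl (by linarith)
            · exact Or.inr (by linarith)
          exact ⟨(pick _ x hu_odd hx' hx4).trans hx1def.symm,
                 (pick _ y hv_odd hy' hy4).trans hy1def.symm⟩
        · -- (a, -b) : element 2
          right
          have hx' : x = (a-5*b) ∨ x = -(a-5*b) := Or.inl (by linarith)
          have hy' : y = (3*a+b) ∨ y = -(3*a+b) := by
            rcases hye with h|h
            · exact Or.inl (by linarith)
            · exact Or.inr (by linarith)
          exact ⟨(pick _ x hu'_odd hx' hx4).trans hx2def.symm,
                 (pick _ y hv'_odd hy' hy4).trans hy2def.symm⟩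
        · -- (-a, b) : element 2
          right
          have hx' : x = (a-5*b) ∨ x = -(a-5*b) := Or.inr (by linarith)
          have hy' : y = (3*a+b) ∨ y = -(3*a+b) := by
            rcases hye with h|h
            · exact Or.inr (by linarith)
            · exact Or.inl (by linarith)
          exact ⟨(pick _ x hu'_odd hx' hx4).trans hx2def.symm,
                 (pick _ y hv'_odd hy' hy4).trans hy2def.symm⟩
        · -- (-a, -b) : element 1
          left
          have hx' : x = (a+5*b) ∨ x = -(a+5*b) := Or.inr (by linarith)
          have hy' : y = (3*a-b) ∨ y = -(3*a-b) := by
            rcases hye with h|h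
            · exact Or.inr (by linarith)
            · exact Or.inl (by linarith)
          exact ⟨(pick _ x hu_odd hx' hx4).trans hx1def.symm,
                 (pick _ y hv_odd hy' hy4).trans hy1def.symm⟩
      · rintro (⟨rfl, rfl⟩|⟨rfl, rfl⟩)
        · refine ⟨hx1mod, hy1mod, ?_⟩
          have : 3*x1^2 + 5*y1^2 = 16*((p:ℕ):ℤ) := by
            rw [hx1sq, hy1sq]; linear_combination (-16)*hab
          linarith
        · refine ⟨hx2mod, hy2mod, ?_⟩
          have : 3*x2^2 + 5*y2^2 = 16*((p:ℕ):ℤ) := by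
            rw [hx2sq, hy2sq]; linear_combination (-16)*hab
          linarith
    unfold lam
    rw [hseteq, finsum_mem_pair hne12]
    rw [hxy1, hxy2]
    linear_combination (-2)*hab
end

section
/- Let a and b be positive integers and let p be an odd prime such that p ≠ a, p ≠ b, p does not divide ab + 1, and p = ax² + by² for some integers x, y. Suppose that ab + 1 is not a perfect square. Then the equation aX² + bY² = (ab+1)p has exactly 8 integer solutions (X, Y), namely the pairs (ε(x + by), δ(ax − y)) and (ε(x − by), δ(ax + y)) for ε, δ ∈ {1, −1}. -/
/-!
Write `p = a x² + b y²`. For a solution `(X, Y)`, `p` divides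
`(aXx + bYy)(aXx - bYy) = a x² · (ab + 1) p - b Y² · p`; replacing `Y` by `-Y` we may assume
`p ∣ aXx + bYy`. Then `p` also divides `Xy - Yx`, and the quotients `s, t` satisfy
`X = s x + b t y`, `Y = s y - a t x`, `s² + ab t² = ab + 1`. Since `ab + 1` is not a square,
`t ≠ 0`, which forces `s, t = ±1`. The conditions `p ≠ a`, `p ≠ b`, `p ∤ ab + 1` make the eight resulting
pairs pairwise distinct.
-/

lemma eq_or_eq_of_prime_eq_mul {q c d : ℤ} (hq : Prime q) (hc : 0 ≤ c) (hd : 0 ≤ d)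
    (h : q = c * d) : q = c ∨ q = d := by
  rcases hq.irreducible.isUnit_or_isUnit h with hu | hu
  · obtain rfl : c = 1 := by have := Int.isUnit_iff.mp hu; omega
    simp [h]
  · obtain rfl : d = 1 := by have := Int.isUnit_iff.mp hu; omega
    simp [h]

lemma sq_eq_one_of_sq_add_mul_sq_eq_add_one {c s t : ℤ} (hc : 0 < c) (hns : ¬ IsSquare (c + 1))
    (h : s ^ 2 + c * t ^ 2 = c + 1) : s ^ 2 = 1 ∧ t ^ 2 = 1 := by
  have ht : t ≠ 0 := by
    rintro rfl
    exact hns ⟨s, by linear_combination -h⟩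
  have ht2 : t ^ 2 = 1 := by
    have : 0 < t ^ 2 := by positivity
    obtain ⟨h₁, h₂⟩ : -1 ≤ t ∧ t ≤ 1 :=
      abs_le.mp (by nlinarith [sq_abs t, abs_nonneg t, sq_nonneg s])
    interval_cases t <;> simp_all
  exact ⟨by linear_combination h - c * ht2, ht2⟩

section Signs

def signs (u v : ℤ) : Finset (ℤ × ℤ) := {u, -u} ×ˢ {v, -v}

lemma card_signs {u v : ℤ} (hu : u ≠ 0) (hv : v ≠ 0) : (signs u v).card = 4 := by
  rw [signs, Finset.card_product, Finset.card_pair, Finset.card_pair] <;> grind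

lemma setOf_signs_eq (u₁ v₁ u₂ v₂ : ℤ) :
    {XY : ℤ × ℤ | ∃ ε δ : ℤ, (ε = 1 ∨ ε = -1) ∧ (δ = 1 ∨ δ = -1) ∧
      (XY = (ε * u₁, δ * v₁) ∨ XY = (ε * u₂, δ * v₂))} = ↑(signs u₁ v₁ ∪ signs u₂ v₂) := by
  ext ⟨X, Y⟩
  simp only [Int.reduceNeg, exists_and_left, exists_eq_or_imp, one_mul, existsAndEq, neg_mul,
    true_and, Set.mem_ofPred_eq, Prod.mk.injEq, signs, Finset.coe_union, Finset.coe_product,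
    Finset.coe_insert, Finset.coe_singleton, Set.mem_union, Set.mem_prod, Set.mem_insert_iff,
    Set.mem_singleton_iff]
  grind

lemma disjoint_signs {u₁ v₁ u₂ v₂ : ℤ} (h : u₁ ≠ u₂) (h' : u₁ ≠ -u₂) :
    Disjoint (signs u₁ v₁) (signs u₂ v₂) := by
  rw [Finset.disjoint_left]
  simp only [signs, Finset.mem_product, Finset.mem_insert, Finset.mem_singleton]
  grind

end Signs

section Descent

variable {a b q x y X Y : ℤ}

lemma prime_dvd_sub_of_prime_dvd_add (hq : Prime q) (ha : ¬ q ∣ a) (hb : ¬ q ∣ b)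
    (hxy : q = a * x ^ 2 + b * y ^ 2) (h : q ∣ a * X * x + b * Y * y) : q ∣ X * y - Y * x := by
  obtain ⟨s, hs⟩ := h
  -- `(aX² + bY²)(ax² + by²) = (aXx + bYy)² + ab(Xy - Yx)²`
  have hd : q ∣ a * b * (X * y - Y * x) ^ 2 :=
    ⟨a * X ^ 2 + b * Y ^ 2 - q * s ^ 2, by
      linear_combination -(a * X ^ 2 + b * Y ^ 2) * hxy - (a * X * x + b * Y * y + q * s) * hs⟩
  rcases hq.dvd_or_dvd hd with hab | h
  · exact absurd (hq.dvd_or_dvd hab) (by tauto)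
  · exact hq.dvd_of_dvd_pow h

lemma exists_eq_of_prime_dvd_add (hq : Prime q) (ha : ¬ q ∣ a) (hb : ¬ q ∣ b)
    (hxy : q = a * x ^ 2 + b * y ^ 2) (h : q ∣ a * X * x + b * Y * y) :
    ∃ s t, X = s * x + b * t * y ∧ Y = s * y - a * t * x := by
  obtain ⟨t, ht⟩ := prime_dvd_sub_of_prime_dvd_add hq ha hb hxy h
  obtain ⟨s, hs⟩ := h
  refine ⟨s, t, mul_left_cancel₀ hq.ne_zero ?_, mul_left_cancel₀ hq.ne_zero ?_⟩
  · linear_combination X * hxy + x * hs + b * y * ht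
  · linear_combination Y * hxy + y * hs - a * x * ht

lemma prime_dvd_add_or_dvd_sub {N : ℤ} (hq : Prime q) (hxy : q = a * x ^ 2 + b * y ^ 2)
    (hXY : a * X ^ 2 + b * Y ^ 2 = N * q) :
    q ∣ a * X * x + b * Y * y ∨ q ∣ a * X * x - b * Y * y :=
  hq.dvd_or_dvd ⟨a * x ^ 2 * N - b * Y ^ 2, by linear_combination a * x ^ 2 * hXY + b * Y ^ 2 * hxy⟩

lemma exists_eq_of_sq_add_mul_sq_eq {N : ℤ} (hq : Prime q) (ha : ¬ q ∣ a) (hb : ¬ q ∣ b)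
    (hxy : q = a * x ^ 2 + b * y ^ 2) (hXY : a * X ^ 2 + b * Y ^ 2 = N * q) :
    ∃ s t, s ^ 2 + a * b * t ^ 2 = N ∧ X = s * x + b * t * y ∧
      (Y = s * y - a * t * x ∨ Y = a * t * x - s * y) := by
  have key : ∃ s t, X = s * x + b * t * y ∧ (Y = s * y - a * t * x ∨ Y = a * t * x - s * y) := by
    rcases prime_dvd_add_or_dvd_sub hq hxy hXY with h | h
    · obtain ⟨s, t, hX, hY⟩ := exists_eq_of_prime_dvd_add hq ha hb hxy h
      exact ⟨s, t, hX, .inl hY⟩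
    · obtain ⟨s, t, hX, hY⟩ :=
        exists_eq_of_prime_dvd_add (Y := -Y) hq ha hb hxy (by simpa [sub_eq_add_neg] using h)
      exact ⟨s, t, hX, .inr (by linear_combination -hY)⟩
  obtain ⟨s, t, hX, hY⟩ := key
  refine ⟨s, t, mul_right_cancel₀ hq.ne_zero ?_, hX, hY⟩
  rcases hY with hY | hY <;> subst hX hY <;>
    linear_combination hXY + (s ^ 2 + a * b * t ^ 2) * hxy

end Descent

section Solutions

variable {a b q x y : ℤ}

lemma ne_zero_of_prime_eq_add (hq : Prime q) (ha : 0 ≤ a) (hqa : q ≠ a)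
    (h : q = a * x ^ 2 + b * y ^ 2) : y ≠ 0 := by
  rintro rfl
  rcases eq_or_eq_of_prime_eq_mul hq ha (sq_nonneg x) (by simpa using h) with h | h
  · exact hqa h
  · exact hq.not_isSquare ⟨x, by rw [h, sq]⟩

lemma not_dvd_of_eq_add (ha : 0 < a) (hb : 0 < b) (hx : x ≠ 0) (hy : y ≠ 0)
    (h : q = a * x ^ 2 + b * y ^ 2) : ¬ q ∣ a := fun hd => by
  have hqa := Int.le_of_dvd ha hd
  have hx2 : 0 < x ^ 2 := by positivity
  have hy2 : 0 < y ^ 2 := by positivity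
  nlinarith

lemma ne_mul_of_not_dvd (hq : Prime q) (ha : 0 < a) (hb : 0 < b) (hqab : ¬ q ∣ a * b + 1)
    {d : ℤ} (hd : 0 ≤ d) : q ≠ (a * b + 1) * d := by
  intro h
  rcases eq_or_eq_of_prime_eq_mul hq (by positivity) hd h with h' | h'
  · exact hqab (h' ▸ dvd_refl _)
  · have : a * b * q = 0 := by linear_combination (a * b + 1) * h' - h
    exact hq.ne_zero ((mul_eq_zero.mp this).resolve_left (by positivity))

variable (ha : 0 < a) (hb : 0 < b) (hq : Prime q) (hxy : q = a * x ^ 2 + b * y ^ 2)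
  (hx : x ≠ 0) (hy : y ≠ 0)
include ha hb hq hxy hx hy

lemma setOf_sq_add_mul_sq_eq (hns : ¬ IsSquare (a * b + 1)) :
    {XY : ℤ × ℤ | a * XY.1 ^ 2 + b * XY.2 ^ 2 = (a * b + 1) * q} =
      ↑(signs (x + b * y) (a * x - y) ∪ signs (x - b * y) (a * x + y)) := by
  ext ⟨X, Y⟩
  simp only [Set.mem_ofPred_eq, Finset.coe_union, Set.mem_union, Finset.mem_coe, signs,
    Finset.mem_product, Finset.mem_insert, Finset.mem_singleton]
  constructor
  · intro hXY
    obtain ⟨s, t, hst, rfl, hY⟩ := exists_eq_of_sq_add_mul_sq_eq hq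
      (not_dvd_of_eq_add ha hb hx hy hxy)
      (not_dvd_of_eq_add (x := y) (y := x) hb ha hy hx (by rw [hxy]; ring)) hxy
      (by rw [hXY, mul_comm])
    obtain ⟨hs, ht⟩ := sq_eq_one_of_sq_add_mul_sq_eq_add_one (by positivity) hns hst
    rcases sq_eq_one_iff.mp hs with rfl | rfl <;> rcases sq_eq_one_iff.mp ht with rfl | rfl <;>
      rcases hY with rfl | rfl <;> grind
  · rintro (⟨rfl | rfl, rfl | rfl⟩ | ⟨rfl | rfl, rfl | rfl⟩) <;>
      linear_combination -(a * b + 1) * hxy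

lemma card_signs_union_eq_eight (hqab : ¬ q ∣ a * b + 1) :
    (signs (x + b * y) (a * x - y) ∪ signs (x - b * y) (a * x + y)).card = 8 := by
  have hne (d : ℤ) (hd : 0 ≤ d) : q ≠ (a * b + 1) * d := ne_mul_of_not_dvd hq ha hb hqab hd
  have hby : b * y ≠ 0 := mul_ne_zero hb.ne' hy
  have hu₁ : x + b * y ≠ 0 := fun h =>
    hne (b * y ^ 2) (by positivity) (by linear_combination hxy + a * (x - b * y) * h)
  have hu₂ : x - b * y ≠ 0 := fun h =>
    hne (b * y ^ 2) (by positivity) (by linear_combination hxy + a * (x + b * y) * h)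
  have hv₁ : a * x - y ≠ 0 := fun h =>
    hne (a * x ^ 2) (by positivity) (by linear_combination hxy - b * (a * x + y) * h)
  have hv₂ : a * x + y ≠ 0 := fun h =>
    hne (a * x ^ 2) (by positivity) (by linear_combination hxy - b * (a * x - y) * h)
  rw [Finset.card_union_of_disjoint (disjoint_signs (by grind) (by grind)), card_signs hu₁ hv₁,
    card_signs hu₂ hv₂]

end Solutions

theorem stmt18_general (a b : ℤ) (ha : 0 < a) (hb : 0 < b)
    (p : ℕ) (hp : p.Prime)
    (hpa : (p : ℤ) ≠ a) (hpb : (p : ℤ) ≠ b) (hpab : ¬ ((p : ℤ) ∣ a * b + 1))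
    (x y : ℤ) (hxy : (p : ℤ) = a * x ^ 2 + b * y ^ 2)
    (hns : ¬ IsSquare (a * b + 1)) :
    {XY : ℤ × ℤ | a * XY.1 ^ 2 + b * XY.2 ^ 2 = (a * b + 1) * (p : ℤ)}.ncard = 8 ∧
    {XY : ℤ × ℤ | a * XY.1 ^ 2 + b * XY.2 ^ 2 = (a * b + 1) * (p : ℤ)} =
      {XY : ℤ × ℤ | ∃ ε δ : ℤ, (ε = 1 ∨ ε = -1) ∧ (δ = 1 ∨ δ = -1) ∧
        (XY = (ε * (x + b * y), δ * (a * x - y)) ∨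
         XY = (ε * (x - b * y), δ * (a * x + y)))} := by
  have hq : Prime (p : ℤ) := Nat.prime_iff_prime_int.mp hp
  have hy := ne_zero_of_prime_eq_add hq ha.le hpa hxy
  have hx := ne_zero_of_prime_eq_add (b := a) (x := y) (y := x) hq hb.le hpb (by rw [hxy]; ring)
  rw [setOf_sq_add_mul_sq_eq ha hb hq hxy hx hy hns, setOf_signs_eq, Set.ncard_coe_finset]
  exact ⟨card_signs_union_eq_eight ha hb hq hxy hx hy hpab, rfl⟩

theorem stmt18 (a b : ℤ) (ha : 0 < a) (hb : 0 < b)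
    (p : ℕ) (hp : p.Prime) (hpodd : Odd p)
    (hpa : (p : ℤ) ≠ a) (hpb : (p : ℤ) ≠ b) (hpab : ¬ ((p : ℤ) ∣ a * b + 1))
    (x y : ℤ) (hxy : (p : ℤ) = a * x ^ 2 + b * y ^ 2)
    (hns : ¬ IsSquare (a * b + 1)) :
    {XY : ℤ × ℤ | a * XY.1 ^ 2 + b * XY.2 ^ 2 = (a * b + 1) * (p : ℤ)}.ncard = 8 ∧
    {XY : ℤ × ℤ | a * XY.1 ^ 2 + b * XY.2 ^ 2 = (a * b + 1) * (p : ℤ)} =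
      {XY : ℤ × ℤ | ∃ ε δ : ℤ, (ε = 1 ∨ ε = -1) ∧ (δ = 1 ∨ δ = -1) ∧
        (XY = (ε * (x + b * y), δ * (a * x - y)) ∨
         XY = (ε * (x - b * y), δ * (a * x + y)))} :=
  stmt18_general a b ha hb p hp hpa hpb hpab x y hxy hns
end

section
/- Let a and b be coprime positive integers and let p be an odd prime such that p ≠ ab, p ≠ ab + 1, and p = x² + aby² for some integers x, y. Suppose that a ≠ 1 and b ≠ 1, or that a + b is not a perfect square. Then the equation aX² + bY² = (a+b)p has exactly 8 integer solutions (X, Y), namely the pairs (ε(x + by), δ(x − ay)) and (ε(x − by), δ(x + ay)) for ε, δ ∈ {1, −1}. -/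
/-!
Put u = x + by and v = x - ay, so that au² + bv² = (a + b)p. For a solution (X, Y),
a(Xv - Yu)(Xv + Yu) = (a + b)p(v² - Y²) and p ∤ a, so after replacing Y by -Y we may assume
p ∣ Xv - Yu. The composition identity
(aX² + bY²)(au² + bv²) = (aXu + bYv)² + ab(Xv - Yu)²
then yields m, k with m² + abk² = (a + b)², (a + b)X = mu + bkv and (a + b)Y = mv - aku.
As au + bv = (a + b)x, this gives (a + b) ∣ (m - ak)u, and u is prime to a + b because
p ∤ a + b.
Writing m - ak = (a + b)t, the pair (c, d) = (k + t, t) satisfies ac² + bd² = a + b,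
X = cx + bdy and Y = dx - acy. Finally ac² + bd² = a + b forces c² = d² = 1: if c = 0 then
b ∣ a, so b = 1 and a + b = d² is a square, which the hypotheses exclude.
-/

def signedPairs (P Q R W : ℤ) : Set (ℤ × ℤ) :=
  {XY | ∃ ε δ : ℤ, (ε = 1 ∨ ε = -1) ∧ (δ = 1 ∨ δ = -1) ∧
    (XY = (ε * P, δ * Q) ∨ XY = (ε * R, δ * W))}

lemma signedPairs_eq (P Q R W : ℤ) :
    signedPairs P Q R W =
      {(P, Q), (P, -Q), (-P, Q), (-P, -Q), (R, W), (R, -W), (-R, W), (-R, -W)} := by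
  ext XY
  simp only [signedPairs, Set.mem_ofPred_eq, or_and_right, exists_or, exists_eq_left,
    exists_and_left, Set.mem_insert_iff, Set.mem_singleton_iff, one_mul, neg_one_mul]
  tauto

lemma ncard_signedPairs {P Q R W : ℤ} (hP : P ≠ 0) (hQ : Q ≠ 0) (hR : R ≠ 0) (hW : W ≠ 0)
    (hPR : P ≠ R) (hPR' : P ≠ -R) : (signedPairs P Q R W).ncard = 8 := by
  rw [signedPairs_eq]
  repeat rw [Set.ncard_insert_of_notMem (by
    simp only [Set.mem_insert_iff, Set.mem_singleton_iff, Prod.ext_iff]; omega)]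
  rw [Set.ncard_singleton]

lemma mk_neg_mem_signedPairs {P Q R W X Y : ℤ} (h : (X, Y) ∈ signedPairs P Q R W) :
    (X, -Y) ∈ signedPairs P Q R W := by
  obtain ⟨ε, δ, hε, hδ, hXY⟩ := h
  refine ⟨ε, -δ, hε, by omega, ?_⟩
  simp only [Prod.ext_iff, neg_mul] at hXY ⊢
  omega

lemma mul_sq_add_mul_sq_of_mem_signedPairs {a b n P Q R W : ℤ}
    (hPQ : a * P ^ 2 + b * Q ^ 2 = n) (hRW : a * R ^ 2 + b * W ^ 2 = n) {XY : ℤ × ℤ}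
    (h : XY ∈ signedPairs P Q R W) : a * XY.1 ^ 2 + b * XY.2 ^ 2 = n := by
  obtain ⟨ε, δ, hε, hδ, rfl | rfl⟩ := h
  all_goals rw [← sq_eq_one_iff] at hε hδ
  · linear_combination hPQ + a * P ^ 2 * hε + b * Q ^ 2 * hδ
  · linear_combination hRW + a * R ^ 2 * hε + b * W ^ 2 * hδ

lemma eq_one_and_isSquare_of_mul_sq_eq_add {a b d : ℤ} (hb : 0 < b) (hcop : IsCoprime a b)
    (h : b * d ^ 2 = a + b) : b = 1 ∧ IsSquare (a + b) := by
  have hunit : IsUnit b := hcop.isUnit_of_dvd' ⟨d ^ 2 - 1, by linear_combination -h⟩ dvd_rfl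
  have hb1 : b = 1 := (Int.isUnit_iff.mp hunit).resolve_right (by omega)
  exact ⟨hb1, d, by rw [← h, hb1]; ring⟩

lemma sq_eq_one_of_mul_sq_add_mul_sq_eq_add {a b c d : ℤ} (ha : 0 < a) (hb : 0 < b)
    (hcop : IsCoprime a b) (hcase : (a ≠ 1 ∧ b ≠ 1) ∨ ¬ IsSquare (a + b))
    (h : a * c ^ 2 + b * d ^ 2 = a + b) : c ^ 2 = 1 ∧ d ^ 2 = 1 := by
  have hc : c ≠ 0 := by
    rintro rfl
    obtain ⟨hb1, hsq⟩ := eq_one_and_isSquare_of_mul_sq_eq_add hb hcop (d := d)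
      (by linear_combination h)
    exact hcase.elim (fun h' => h'.2 hb1) (· hsq)
  have hd : d ≠ 0 := by
    rintro rfl
    obtain ⟨ha1, hsq⟩ := eq_one_and_isSquare_of_mul_sq_eq_add ha hcop.symm (d := c)
      (by linear_combination h)
    exact hcase.elim (fun h' => h'.1 ha1) (· (add_comm a b ▸ hsq))
  have hc1 : 1 ≤ c ^ 2 := sq_pos_of_ne_zero hc
  have hd1 : 1 ≤ d ^ 2 := sq_pos_of_ne_zero hd
  constructor <;> nlinarith

lemma sq_eq_one_of_prime_eq_mul_sq {p z w : ℤ} (hp : Prime p) (h : p = z * w ^ 2) : w ^ 2 = 1 :=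
  Int.isUnit_sq (hp.squarefree w ⟨z, by rw [h]; ring⟩)

section Nondegenerate

variable {a b p x y : ℤ}

lemma right_ne_zero_of_prime_eq_sq_add_mul_sq (hp : Prime p) (hxy : p = x ^ 2 + a * b * y ^ 2) :
    y ≠ 0 := by
  rintro rfl
  have hx : x ^ 2 = 1 := sq_eq_one_of_prime_eq_mul_sq hp (z := 1) (by rw [hxy]; ring)
  exact hp.ne_one (by rw [hxy, hx]; ring)

lemma mul_lt_of_prime_eq_sq_add_mul_sq (ha : 0 < a) (hb : 0 < b) (hp : Prime p)
    (hpab : p ≠ a * b) (hxy : p = x ^ 2 + a * b * y ^ 2) : a * b < p := by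
  have hy : 0 < y ^ 2 := by
    have := right_ne_zero_of_prime_eq_sq_add_mul_sq hp hxy
    positivity
  have hle : a * b ≤ p := by nlinarith [sq_nonneg x, mul_pos ha hb]
  exact hle.lt_of_ne' hpab

lemma left_ne_zero_of_prime_eq_sq_add_mul_sq (hp : Prime p)
    (hpab : p ≠ a * b) (hxy : p = x ^ 2 + a * b * y ^ 2) : x ≠ 0 := by
  rintro rfl
  have hy : y ^ 2 = 1 := sq_eq_one_of_prime_eq_mul_sq hp (z := a * b) (by rw [hxy]; ring)
  exact hpab (by rw [hxy, hy]; ring)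

lemma add_mul_ne_zero_of_prime_eq_sq_add_mul_sq (ha : 0 < a) (hb : 0 < b) (hp : Prime p)
    (hpab1 : p ≠ a * b + 1) (hxy : p = x ^ 2 + a * b * y ^ 2) : x + b * y ≠ 0 := by
  intro h
  have hp' : p = (a + b) * b * y ^ 2 := by
    rw [hxy, eq_neg_of_add_eq_zero_left h]; ring
  rw [sq_eq_one_of_prime_eq_mul_sq hp hp', mul_one] at hp'
  rcases hp.irreducible.isUnit_or_isUnit hp' with hu | hu
  · rcases Int.isUnit_iff.mp hu with h | h <;> omega
  · rcases Int.isUnit_iff.mp hu with rfl | h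
    · exact hpab1 (by rw [hp']; ring)
    · omega

lemma add_mul_ne_zero_and_sub_mul_ne_zero (ha : 0 < a) (hb : 0 < b) (hp : Prime p)
    (hpab1 : p ≠ a * b + 1) (hxy : p = x ^ 2 + a * b * y ^ 2) :
    x + b * y ≠ 0 ∧ x - b * y ≠ 0 := by
  refine ⟨add_mul_ne_zero_of_prime_eq_sq_add_mul_sq ha hb hp hpab1 hxy, ?_⟩
  rw [sub_eq_add_neg, ← mul_neg]
  exact add_mul_ne_zero_of_prime_eq_sq_add_mul_sq ha hb hp hpab1 (by rw [hxy]; ring)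

lemma not_dvd_left_of_prime_eq_sq_add_mul_sq (ha : 0 < a) (hb : 0 < b) (hp : Prime p)
    (hpab : p ≠ a * b) (hxy : p = x ^ 2 + a * b * y ^ 2) : ¬ p ∣ a := by
  intro h
  have := Int.le_of_dvd ha h
  nlinarith [mul_lt_of_prime_eq_sq_add_mul_sq ha hb hp hpab hxy]

lemma not_dvd_add_of_prime_eq_sq_add_mul_sq (ha : 0 < a) (hb : 0 < b) (hp : Prime p)
    (hpab : p ≠ a * b) (hpab1 : p ≠ a * b + 1) (hxy : p = x ^ 2 + a * b * y ^ 2) :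
    ¬ p ∣ a + b := by
  intro h
  have := Int.le_of_dvd (by omega) h
  have := mul_lt_of_prime_eq_sq_add_mul_sq ha hb hp hpab hxy
  exact hpab1 (by nlinarith)

lemma isCoprime_add_of_prime_eq_sq_add_mul_sq (hp : Prime p) (hp_add : ¬ p ∣ a + b)
    (hxy : p = x ^ 2 + a * b * y ^ 2) : IsCoprime (a + b) (x + b * y) := by
  have h : IsCoprime (a + b) ((x + b * y) * (x - b * y) + (a + b) * (b * y ^ 2)) := by
    rw [show (x + b * y) * (x - b * y) + (a + b) * (b * y ^ 2) = p by rw [hxy]; ring]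
    exact (hp.coprime_iff_not_dvd.mpr hp_add).symm
  exact h.of_add_mul_left_right.of_mul_right_left

end Nondegenerate

lemma exists_sq_add_mul_sq_eq_sq_of_prime_dvd_cross {a b p u v X Y : ℤ} (hp : Prime p)
    (huv : a * u ^ 2 + b * v ^ 2 = (a + b) * p) (hXY : a * X ^ 2 + b * Y ^ 2 = (a + b) * p)
    (hdvd : p ∣ X * v - Y * u) :
    ∃ m k : ℤ, m ^ 2 + a * b * k ^ 2 = (a + b) ^ 2 ∧
      (a + b) * X = m * u + b * k * v ∧ (a + b) * Y = m * v - a * k * u := by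
  obtain ⟨k, hk⟩ := hdvd
  have hsq : (a * X * u + b * Y * v) ^ 2 = p ^ 2 * ((a + b) ^ 2 - a * b * k ^ 2) := by
    linear_combination (a * u ^ 2 + b * v ^ 2) * hXY + (a + b) * p * huv
      - a * b * (X * v - Y * u + p * k) * hk
  obtain ⟨m, hm⟩ : p ∣ a * X * u + b * Y * v :=
    hp.dvd_of_dvd_pow (n := 2) ⟨p * ((a + b) ^ 2 - a * b * k ^ 2), by rw [hsq]; ring⟩
  refine ⟨m, k, mul_left_cancel₀ (pow_ne_zero 2 hp.ne_zero) ?_,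
    mul_left_cancel₀ hp.ne_zero ?_, mul_left_cancel₀ hp.ne_zero ?_⟩
  · linear_combination hsq - (a * X * u + b * Y * v + p * m) * hm
  · linear_combination u * hm + b * v * hk - X * huv
  · linear_combination v * hm - a * u * hk - Y * huv

lemma exists_mul_sq_add_mul_sq_eq_add {a b x y m k X Y : ℤ} (hab : a + b ≠ 0)
    (hcop : IsCoprime (a + b) (x + b * y)) (hmk : m ^ 2 + a * b * k ^ 2 = (a + b) ^ 2)
    (hX : (a + b) * X = m * (x + b * y) + b * k * (x - a * y))
    (hY : (a + b) * Y = m * (x - a * y) - a * k * (x + b * y)) :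
    ∃ c d : ℤ, a * c ^ 2 + b * d ^ 2 = a + b ∧
      X = c * x + b * d * y ∧ Y = d * x - a * c * y := by
  obtain ⟨t, ht⟩ : a + b ∣ m - a * k :=
    hcop.dvd_of_dvd_mul_right ⟨X - k * x, by linear_combination -hX⟩
  refine ⟨k + t, t, mul_left_cancel₀ hab ?_, mul_left_cancel₀ hab ?_,
    mul_left_cancel₀ hab ?_⟩
  · linear_combination hmk - (m + a * k + (a + b) * t) * ht
  · linear_combination hX + (x + b * y) * ht
  · linear_combination hY + (x - a * y) * ht

lemma mk_mem_signedPairs {a b x y c d : ℤ} (hc : c ^ 2 = 1) (hd : d ^ 2 = 1) :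
    (c * x + b * d * y, d * x - a * c * y) ∈
      signedPairs (x + b * y) (x - a * y) (x - b * y) (x + a * y) := by
  refine ⟨c, d, sq_eq_one_iff.mp hc, sq_eq_one_iff.mp hd, ?_⟩
  simp only [Prod.ext_iff]
  obtain rfl | rfl := sq_eq_one_iff.mp hc <;> obtain rfl | rfl := sq_eq_one_iff.mp hd
  exacts [.inl ⟨by ring, by ring⟩, .inr ⟨by ring, by ring⟩, .inr ⟨by ring, by ring⟩,
    .inl ⟨by ring, by ring⟩]

section Solutions

variable {a b p x y : ℤ}

lemma exists_sq_eq_one_of_prime_dvd_cross (ha : 0 < a) (hb : 0 < b) (hcop : IsCoprime a b)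
    (hcase : (a ≠ 1 ∧ b ≠ 1) ∨ ¬ IsSquare (a + b)) (hp : Prime p) (hp_add : ¬ p ∣ a + b)
    (hxy : p = x ^ 2 + a * b * y ^ 2) {X Y : ℤ} (hXY : a * X ^ 2 + b * Y ^ 2 = (a + b) * p)
    (hdvd : p ∣ X * (x - a * y) - Y * (x + b * y)) :
    ∃ c d : ℤ, c ^ 2 = 1 ∧ d ^ 2 = 1 ∧ X = c * x + b * d * y ∧ Y = d * x - a * c * y := by
  obtain ⟨m, k, hmk, hX, hY⟩ :=
    exists_sq_add_mul_sq_eq_sq_of_prime_dvd_cross hp (by rw [hxy]; ring) hXY hdvd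
  obtain ⟨c, d, hcd, rfl, rfl⟩ := exists_mul_sq_add_mul_sq_eq_add (by omega)
    (isCoprime_add_of_prime_eq_sq_add_mul_sq hp hp_add hxy) hmk hX hY
  obtain ⟨hc, hd⟩ := sq_eq_one_of_mul_sq_add_mul_sq_eq_add ha hb hcop hcase hcd
  exact ⟨c, d, hc, hd, rfl, rfl⟩

lemma mem_signedPairs_of_mul_sq_add_mul_sq_eq (ha : 0 < a) (hb : 0 < b) (hcop : IsCoprime a b)
    (hcase : (a ≠ 1 ∧ b ≠ 1) ∨ ¬ IsSquare (a + b)) (hp : Prime p) (hpab : p ≠ a * b)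
    (hpab1 : p ≠ a * b + 1) (hxy : p = x ^ 2 + a * b * y ^ 2) {X Y : ℤ}
    (hXY : a * X ^ 2 + b * Y ^ 2 = (a + b) * p) :
    (X, Y) ∈ signedPairs (x + b * y) (x - a * y) (x - b * y) (x + a * y) := by
  have hpa := not_dvd_left_of_prime_eq_sq_add_mul_sq ha hb hp hpab hxy
  have hp_add := not_dvd_add_of_prime_eq_sq_add_mul_sq ha hb hp hpab hpab1 hxy
  have huv : a * (x + b * y) ^ 2 + b * (x - a * y) ^ 2 = (a + b) * p := by rw [hxy]; ring
  have hdvd : p ∣ (X * (x - a * y) - Y * (x + b * y)) * (X * (x - a * y) + Y * (x + b * y)) := by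
    refine (hp.dvd_mul.mp ⟨(a + b) * ((x - a * y) ^ 2 - Y ^ 2), ?_⟩).resolve_left hpa
    linear_combination (x - a * y) ^ 2 * hXY - Y ^ 2 * huv
  rcases hp.dvd_mul.mp hdvd with h | h
  · obtain ⟨c, d, hc, hd, rfl, rfl⟩ :=
      exists_sq_eq_one_of_prime_dvd_cross ha hb hcop hcase hp hp_add hxy hXY h
    exact mk_mem_signedPairs hc hd
  · obtain ⟨c, d, hc, hd, hX, hY⟩ :=
      exists_sq_eq_one_of_prime_dvd_cross ha hb hcop hcase hp hp_add hxy (X := X) (Y := -Y)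
        (by linear_combination hXY) (by rwa [neg_mul, sub_neg_eq_add])
    have hmem : (X, -Y) ∈ signedPairs (x + b * y) (x - a * y) (x - b * y) (x + a * y) := by
      rw [hX, hY]
      exact mk_mem_signedPairs hc hd
    simpa only [neg_neg] using mk_neg_mem_signedPairs hmem

end Solutions

theorem stmt19_general (a b : ℤ) (ha : 0 < a) (hb : 0 < b) (hcop : IsCoprime a b)
    (p : ℕ) (hp : p.Prime)
    (hpab : (p : ℤ) ≠ a * b) (hpab1 : (p : ℤ) ≠ a * b + 1)
    (x y : ℤ) (hxy : (p : ℤ) = x ^ 2 + a * b * y ^ 2)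
    (hcase : (a ≠ 1 ∧ b ≠ 1) ∨ ¬ IsSquare (a + b)) :
    {XY : ℤ × ℤ | a * XY.1 ^ 2 + b * XY.2 ^ 2 = (a + b) * (p : ℤ)}.ncard = 8 ∧
    {XY : ℤ × ℤ | a * XY.1 ^ 2 + b * XY.2 ^ 2 = (a + b) * (p : ℤ)} =
      {XY : ℤ × ℤ | ∃ ε δ : ℤ, (ε = 1 ∨ ε = -1) ∧ (δ = 1 ∨ δ = -1) ∧
        (XY = (ε * (x + b * y), δ * (x - a * y)) ∨
         XY = (ε * (x - b * y), δ * (x + a * y)))} := by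
  have hpZ : Prime (p : ℤ) := Nat.prime_iff_prime_int.mp hp
  have hS : {XY : ℤ × ℤ | a * XY.1 ^ 2 + b * XY.2 ^ 2 = (a + b) * (p : ℤ)} =
      signedPairs (x + b * y) (x - a * y) (x - b * y) (x + a * y) := by
    ext ⟨X, Y⟩
    exact ⟨mem_signedPairs_of_mul_sq_add_mul_sq_eq ha hb hcop hcase hpZ hpab hpab1 hxy,
      mul_sq_add_mul_sq_of_mem_signedPairs (by rw [hxy]; ring) (by rw [hxy]; ring)⟩
  refine ⟨?_, hS⟩
  obtain ⟨hu, hu'⟩ := add_mul_ne_zero_and_sub_mul_ne_zero ha hb hpZ hpab1 hxy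
  obtain ⟨hv', hv⟩ := add_mul_ne_zero_and_sub_mul_ne_zero hb ha hpZ (by rwa [mul_comm b])
    (y := y) (by rw [hxy]; ring)
  have hx := left_ne_zero_of_prime_eq_sq_add_mul_sq hpZ hpab hxy
  have hby : b * y ≠ 0 := mul_ne_zero hb.ne' (right_ne_zero_of_prime_eq_sq_add_mul_sq hpZ hxy)
  rw [hS]
  exact ncard_signedPairs hu hv hu' hv' (fun h => hby (by linarith)) (fun h => hx (by linarith))

theorem stmt19 (a b : ℤ) (ha : 0 < a) (hb : 0 < b) (hcop : IsCoprime a b)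
    (p : ℕ) (hp : p.Prime) (hpodd : Odd p)
    (hpab : (p : ℤ) ≠ a * b) (hpab1 : (p : ℤ) ≠ a * b + 1)
    (x y : ℤ) (hxy : (p : ℤ) = x ^ 2 + a * b * y ^ 2)
    (hcase : (a ≠ 1 ∧ b ≠ 1) ∨ ¬ IsSquare (a + b)) :
    {XY : ℤ × ℤ | a * XY.1 ^ 2 + b * XY.2 ^ 2 = (a + b) * (p : ℤ)}.ncard = 8 ∧
    {XY : ℤ × ℤ | a * XY.1 ^ 2 + b * XY.2 ^ 2 = (a + b) * (p : ℤ)} =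
      {XY : ℤ × ℤ | ∃ ε δ : ℤ, (ε = 1 ∨ ε = -1) ∧ (δ = 1 ∨ δ = -1) ∧
        (XY = (ε * (x + b * y), δ * (x - a * y)) ∨
         XY = (ε * (x - b * y), δ * (x + a * y)))} :=
  stmt19_general a b ha hb hcop p hp hpab hpab1 x y hxy hcase
end
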